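/- arXiv:2211.16146 — 2 statements merged into one kernel-verified Lean document; each statement's English description precedes it below -/
import Mathlib

section
/- The largest eigenvalue λ of the matrix M = [[1,2,0],[1,1,1],[1,1,0]] satisfies λ < 2.8313, and λ is the unique real root of its characteristic polynomial exceeding 2. -/
/-!
The characteristic polynomial is `f x = x³ - 2x² - 2x - 1`. It changes sign on `[2, 2.8313]`,
so it has a root there, and it is strictly increasing on `[2, ∞)`, so that root is the only one
above `2` and hence the largest real root.
-/

open Matrix Polynomial

lemma charpoly_automatonMatrix :
    (!![1, 2, 0; 1, 1, 1; 1, 1, 0] : Matrix (Fin 3) (Fin 3) ℝ).charpoly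
      = X ^ 3 - 2 * X ^ 2 - 2 * X - 1 := by
  rw [Matrix.charpoly, Matrix.det_fin_three]
  simp [map_ofNat]
  ring

lemma isRoot_charpoly_automatonMatrix_iff (x : ℝ) :
    (!![1, 2, 0; 1, 1, 1; 1, 1, 0] : Matrix (Fin 3) (Fin 3) ℝ).charpoly.IsRoot x ↔
      x ^ 3 - 2 * x ^ 2 - 2 * x - 1 = 0 := by
  simp [charpoly_automatonMatrix]

lemma strictMonoOn_cubic :
    StrictMonoOn (fun x : ℝ => x ^ 3 - 2 * x ^ 2 - 2 * x - 1) (Set.Ici 2) := by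
  intro x (hx : 2 ≤ x) y (hy : 2 ≤ y) hxy
  have hfactor : (y ^ 3 - 2 * y ^ 2 - 2 * y - 1) - (x ^ 3 - 2 * x ^ 2 - 2 * x - 1)
      = (y - x) * (x ^ 2 + x * y + y ^ 2 - 2 * x - 2 * y - 2) := by ring
  have hcofactor : 0 < x ^ 2 + x * y + y ^ 2 - 2 * x - 2 * y - 2 := by nlinarith
  show x ^ 3 - 2 * x ^ 2 - 2 * x - 1 < y ^ 3 - 2 * y ^ 2 - 2 * y - 1
  linarith [mul_pos (sub_pos.2 hxy) hcofactor]

lemma exists_root_cubic_mem_Ioo :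
    ∃ lam ∈ Set.Ioo (2 : ℝ) 2.8313, lam ^ 3 - 2 * lam ^ 2 - 2 * lam - 1 = 0 :=
  intermediate_value_Ioo (by norm_num) (by fun_prop) (by norm_num)

/-- The largest eigenvalue `λ` of `M = [[1,2,0],[1,1,1],[1,1,0]]` satisfies
`λ < 2.8313`, and `λ` is the unique real root of the characteristic polynomial
of `M` exceeding `2`. -/
theorem automaton_matrix_eigenvalue_bound
    (M : Matrix (Fin 3) (Fin 3) ℝ)
    (hM : M = !![1, 2, 0; 1, 1, 1; 1, 1, 0]) :
    ∃ lam : ℝ,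
      M.charpoly.IsRoot lam ∧
      (∀ x : ℝ, M.charpoly.IsRoot x → x ≤ lam) ∧
      2 < lam ∧ lam < 2.8313 ∧
      ∀ x : ℝ, M.charpoly.IsRoot x → 2 < x → x = lam := by
  subst hM
  simp only [isRoot_charpoly_automatonMatrix_iff]
  obtain ⟨lam, ⟨h2lam, hlam⟩, hroot⟩ := exists_root_cubic_mem_Ioo
  have huniq : ∀ x : ℝ, x ^ 3 - 2 * x ^ 2 - 2 * x - 1 = 0 → 2 < x → x = lam :=
    fun x hx h2x ↦ strictMonoOn_cubic.injOn (Set.mem_Ici.2 h2x.le)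
      (Set.mem_Ici.2 h2lam.le) (hx.trans hroot.symm)
  refine ⟨lam, hroot, fun x hx ↦ ?_, h2lam, hlam, huniq⟩
  rcases le_or_gt x 2 with h2x | h2x
  · linarith
  · exact (huniq x hx h2x).le
end

section
/- In Z^2, if the vertices of a self-avoiding walk w separate the plane so that the component of Z^2 \ (vertices of w except B) containing the first vertex B is finite, then every self-avoiding walk extending the reverse of w has length at most |w| + (size of that finite component). -/
open Filter Topology

/-- Two vertices of `ℤ²` are adjacent if they differ by a unit vector. -/
def LatAdj (u v : ℤ × ℤ) : Prop :=
  (u.1 - v.1).natAbs + (u.2 - v.2).natAbs = 1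

/-- A self-avoiding walk of length `n` starting at the origin in `ℤ²`. -/
def IsSAW (n : ℕ) (w : Fin (n + 1) → ℤ × ℤ) : Prop :=
  w 0 = (0, 0) ∧ Function.Injective w ∧
    ∀ i : Fin n, LatAdj (w i.castSucc) (w i.succ)

/-- The number of self-avoiding walks of length `n` starting at the origin. -/
noncomputable def sawCount (n : ℕ) : ℕ :=
  Nat.card {w : Fin (n + 1) → ℤ × ℤ // IsSAW n w}

/-- A self-avoiding walk of length `n` in `ℤ²` (arbitrary starting point). -/
def FreeSAW (n : ℕ) (w : Fin (n + 1) → ℤ × ℤ) : Prop :=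
  Function.Injective w ∧ ∀ i : Fin n, LatAdj (w i.castSucc) (w i.succ)

/-- Reachability in `ℤ²` avoiding a set `S` of vertices. -/
def LatReach (S : Set (ℤ × ℤ)) : ℤ × ℤ → ℤ × ℤ → Prop :=
  Relation.ReflTransGen (fun a b => LatAdj a b ∧ a ∉ S ∧ b ∉ S)

/-!
Let `e` extend the reverse of `w`, so that `e m = w 0 = B`. The vertices `e m, …, e n` are distinct
and, apart from `e m = B`, none of them lies on `w`, since `e` is injective and already visits the
vertices of `w` at the indices `0, …, m`. Hence `e m, …, e n` is a walk from `B` avoiding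
`range w \ {B}`, so these `n - m + 1` distinct vertices all lie in the component of `B`.
-/

open Function Relation

theorem Fin.reflTransGen_of_chain {α : Type*} {r : α → α → Prop} {n : ℕ}
    {e : Fin (n + 1) → α} {a : Fin (n + 1)}
    (he : ∀ i : Fin n, a ≤ i.castSucc → r (e i.castSucc) (e i.succ)) :
    ∀ {b : Fin (n + 1)}, a ≤ b → ReflTransGen r (e a) (e b)
  | ⟨0, _⟩, hab => by
    rw [Fin.le_antisymm hab (Fin.zero_le a)]
  | ⟨k + 1, hk⟩, hab => by
    rcases hab.eq_or_lt with rfl | hlt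
    · exact .refl
    · have hak : a ≤ (⟨k, by omega⟩ : Fin n).castSucc := Nat.le_of_lt_succ hlt
      exact .tail (reflTransGen_of_chain he hak) (he ⟨k, by omega⟩ hak)

theorem Fin.sub_le_ncard_of_injective {α : Type*} {n : ℕ} {f : Fin (n + 1) → α}
    (hf : Injective f) {t : Set α} (ht : t.Finite) {a : Fin (n + 1)}
    (hmaps : Set.MapsTo f (Set.Ici a) t) : n + 1 - a ≤ t.ncard := by
  calc n + 1 - (a : ℕ) = (Set.Ici a).ncard := by
        rw [← Finset.coe_Ici, Set.ncard_coe_finset, Fin.card_Ici]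
    _ ≤ t.ncard := Set.ncard_le_ncard_of_injOn f hmaps hf.injOn ht

/-- If the component of the first vertex `B` of a self-avoiding walk `w` in
`ℤ²` minus the other vertices of `w` is finite, then every self-avoiding walk
extending the reverse of `w` has length at most `|w|` plus the size of that
component. -/
theorem finite_component_bounds_extension (m : ℕ)
    (w : Fin (m + 1) → ℤ × ℤ)
    (B : ℤ × ℤ) (hB : B = w 0)
    (comp : Set (ℤ × ℤ))
    (hcomp : comp = {v | LatReach (Set.range w \ {B}) B v})
    (hfin : comp.Finite) :
    ∀ (n : ℕ) (e : Fin (n + 1) → ℤ × ℤ) (he : FreeSAW n e) (hmn : m ≤ n),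
      (∀ i : Fin (m + 1), e ⟨(i : ℕ), by omega⟩ = w ⟨m - (i : ℕ), by omega⟩) →
      n ≤ m + comp.ncard := by
  subst hB hcomp
  intro n e he hmn hext
  set a : Fin (n + 1) := ⟨m, by omega⟩
  have hstart : e a = w 0 := by simpa using hext (Fin.last m)
  have hrange : Set.range w ⊆ e '' Set.Iic a := by
    rintro _ ⟨k, rfl⟩
    refine ⟨⟨m - k, by omega⟩, Fin.le_def.2 (Nat.sub_le m k), ?_⟩
    rw [hext ⟨m - k, by omega⟩]
    congr
    simp only
    omega
  have htail_avoids : ∀ j, a ≤ j → e j ∉ Set.range w \ {w 0} := by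
    rintro j haj ⟨hj, hne⟩
    obtain ⟨i, hia, hij⟩ := hrange hj
    obtain rfl : j = a := le_antisymm (he.1 hij ▸ hia) haj
    exact hne hstart
  have htail_mem : ∀ j, a ≤ j → e j ∈ {v | LatReach (Set.range w \ {w 0}) (w 0) v} := by
    intro j haj
    have hwalk : LatReach (Set.range w \ {w 0}) (e a) (e j) :=
      Fin.reflTransGen_of_chain (fun i hi =>
        ⟨he.2 i, htail_avoids _ hi, htail_avoids _ (hi.trans (Fin.castSucc_le_succ i))⟩) haj
    rwa [hstart] at hwalk
  have : n + 1 - m ≤ _ := Fin.sub_le_ncard_of_injective he.1 hfin htail_mem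
  omega
end
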